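/- Let f be a self-concordant function on R^n with Hessian H(θ), local norms ‖v‖_θ = √⟨v, H(θ)v⟩, and let θ₀, θ₁ satisfy Δ := ‖θ₁ − θ₀‖_{θ₀} < 1. Let μ₀ and μ₁ be the Boltzmann distributions on a convex body K with parameters θ₀, θ₁ (density proportional to e^{⟨θ_i,x⟩}), where f(θ) = ln ∫_K e^{⟨θ,x⟩}dx. Then the L²-norm satisfies ‖μ₀/μ₁‖ ≤ exp(−2Δ)/(1−Δ)², and ‖μ₀/μ₁‖ ≥ exp(Δ²[1 + Δ²/6 − 2Δ/3]). -/

import Mathlib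

open MeasureTheory
open scoped RealInnerProductSpace

/-- The Boltzmann distribution on `K` with parameter `θ`. -/
noncomputable def boltzmann {n : ℕ} (K : Set (EuclideanSpace ℝ (Fin n)))
    (θ : EuclideanSpace ℝ (Fin n)) : Measure (EuclideanSpace ℝ (Fin n)) :=
  let ν := (volume.restrict K).withDensity fun x => ENNReal.ofReal (Real.exp ⟪θ, x⟫)
  (ν Set.univ)⁻¹ • ν

/-- The mean of a measure on Euclidean space. -/
noncomputable def meanVec {n : ℕ} (μ : Measure (EuclideanSpace ℝ (Fin n))) :
    EuclideanSpace ℝ (Fin n) := ∫ x, x ∂μ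

/-- The covariance bilinear form of a measure; for the Boltzmann distribution with
parameter `θ` this is the Hessian `H(θ)` of the log partition function `f`. -/
noncomputable def covForm {n : ℕ} (μ : Measure (EuclideanSpace ℝ (Fin n)))
    (v w : EuclideanSpace ℝ (Fin n)) : ℝ :=
  ∫ x, ⟪x - meanVec μ, v⟫ * ⟪x - meanVec μ, w⟫ ∂μ

/-- The local norm `‖v‖_θ = √⟨v, H(θ)v⟩` induced by the Hessian of the log partition
function of `K`. -/
noncomputable def lnorm {n : ℕ} (K : Set (EuclideanSpace ℝ (Fin n)))
    (θ v : EuclideanSpace ℝ (Fin n)) : ℝ :=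
  Real.sqrt (covForm (boltzmann K θ) v v)

/-! Put `φ t = f (θ₀ + t • u)` with `f = logPartitionFn K`, `u = θ₁ - θ₀` and `Δ = ‖u‖_{θ₀}`.
Differentiating under the integral, `φ' t` is the mean and `φ'' t` the variance of `⟪u, x⟫`
under `boltzmann K (θ₀ + t • u)`, i.e. `φ'' t = ‖u‖²_{θ₀ + t u}`, and self-concordance pins it
between `Δ² (1 - Δ|t|)²` and `Δ² / (1 - Δ|t|)²` for `|t| ≤ 1`. Since `dμ₀/dμ₁ ∝ e^{-⟪u, x⟫}`,
the norm `‖μ₀/μ₁‖` equals `exp (φ 1 + φ (-1) - 2 φ 0)`, and integrating the two bounds on `φ''`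
twice from `0` bounds this symmetric second difference from both sides. -/

open MeasureTheory ProbabilityTheory Set

lemma le_of_second_deriv_le {f f' f'' g g' g'' : ℝ → ℝ} {a b : ℝ}
    (hf : ∀ x ∈ Icc a b, HasDerivAt f (f' x) x) (hf' : ∀ x ∈ Icc a b, HasDerivAt f' (f'' x) x)
    (hg : ∀ x ∈ Icc a b, HasDerivAt g (g' x) x) (hg' : ∀ x ∈ Icc a b, HasDerivAt g' (g'' x) x)
    (ha : f a ≤ g a) (ha' : f' a ≤ g' a) (hle : ∀ x ∈ Ico a b, f'' x ≤ g'' x) :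
    ∀ x ∈ Icc a b, f x ≤ g x := by
  have continuousOn_of {F F' : ℝ → ℝ} (hF : ∀ x ∈ Icc a b, HasDerivAt F (F' x) x) :
      ContinuousOn F (Icc a b) := fun x hx => (hF x hx).continuousAt.continuousWithinAt
  have within_of {F F' : ℝ → ℝ} (hF : ∀ x ∈ Icc a b, HasDerivAt F (F' x) x) :
      ∀ x ∈ Ico a b, HasDerivWithinAt F (F' x) (Ici x) x :=
    fun x hx => (hF x (Ico_subset_Icc_self hx)).hasDerivWithinAt
  have hle' : ∀ x ∈ Icc a b, f' x ≤ g' x :=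
    image_le_of_deriv_right_le_deriv_boundary (continuousOn_of hf') (within_of hf') ha'
      (continuousOn_of hg') (within_of hg') hle
  exact image_le_of_deriv_right_le_deriv_boundary (continuousOn_of hf) (within_of hf) ha
    (continuousOn_of hg) (within_of hg) fun x hx => hle' x (Ico_subset_Icc_self hx)

lemma apply_one_le_of_second_deriv_le {F F' F'' : ℝ → ℝ} {Δ : ℝ} (hΔ0 : 0 ≤ Δ) (hΔ1 : Δ < 1)
    (hF : ∀ t ∈ Icc (0 : ℝ) 1, HasDerivAt F (F' t) t)
    (hF' : ∀ t ∈ Icc (0 : ℝ) 1, HasDerivAt F' (F'' t) t) (h0 : F 0 = 0) (h0' : F' 0 = 0)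
    (hle : ∀ t ∈ Ico (0 : ℝ) 1, F'' t ≤ 2 * (Δ / (1 - Δ * t)) ^ 2) :
    F 1 ≤ -2 * Δ - 2 * Real.log (1 - Δ) := by
  have hpos : ∀ t ∈ Icc (0 : ℝ) 1, 0 < 1 - Δ * t := fun t ht => by nlinarith [ht.2]
  have hlin (t : ℝ) : HasDerivAt (fun s => 1 - Δ * s) (-Δ) t := by
    simpa using ((hasDerivAt_id t).const_mul Δ).const_sub 1
  have hP (t) (ht : t ∈ Icc (0 : ℝ) 1) : HasDerivAt (fun s => -2 * Δ * s - 2 * Real.log (1 - Δ * s))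
      (-2 * Δ + 2 * Δ / (1 - Δ * t)) t := by
    have := ((hasDerivAt_id t).const_mul (-2 * Δ)).sub (((hlin t).log (hpos t ht).ne').const_mul 2)
    exact this.congr_deriv (by field_simp; ring)
  have hP' (t) (ht : t ∈ Icc (0 : ℝ) 1) : HasDerivAt (fun s => -2 * Δ + 2 * Δ / (1 - Δ * s))
      (2 * (Δ / (1 - Δ * t)) ^ 2) t := by
    have := ((hasDerivAt_const t (2 * Δ)).div (hlin t) (hpos t ht).ne').const_add (-2 * Δ)
    exact this.congr_deriv (by field_simp; ring)
  have := le_of_second_deriv_le hF hF' hP hP' (by simp [h0]) (by simp [h0']) hle 1 (by simp)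
  simpa using this

lemma le_apply_one_of_le_second_deriv {F F' F'' : ℝ → ℝ} {Δ : ℝ}
    (hF : ∀ t ∈ Icc (0 : ℝ) 1, HasDerivAt F (F' t) t)
    (hF' : ∀ t ∈ Icc (0 : ℝ) 1, HasDerivAt F' (F'' t) t) (h0 : F 0 = 0) (h0' : F' 0 = 0)
    (hle : ∀ t ∈ Ico (0 : ℝ) 1, 2 * (Δ * (1 - Δ * t)) ^ 2 ≤ F'' t) :
    Δ ^ 2 * (1 + Δ ^ 2 / 6 - 2 * Δ / 3) ≤ F 1 := by
  have hlin (t : ℝ) : HasDerivAt (fun s => 1 - Δ * s) (-Δ) t := by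
    simpa using ((hasDerivAt_id t).const_mul Δ).const_sub 1
  have hQ (t) (_ : t ∈ Icc (0 : ℝ) 1) :
      HasDerivAt (fun s => 2 * Δ / 3 * s + ((1 - Δ * s) ^ 4 - 1) / 6)
        (2 * Δ / 3 * (1 - (1 - Δ * t) ^ 3)) t := by
    have := ((hasDerivAt_id t).const_mul (2 * Δ / 3)).add
      ((((hlin t).pow 4).sub_const 1).div_const 6)
    exact this.congr_deriv (by ring)
  have hQ' (t) (_ : t ∈ Icc (0 : ℝ) 1) : HasDerivAt (fun s => 2 * Δ / 3 * (1 - (1 - Δ * s) ^ 3))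
      (2 * (Δ * (1 - Δ * t)) ^ 2) t := by
    have := (((hlin t).pow 3).const_sub 1).const_mul (2 * Δ / 3)
    exact this.congr_deriv (by ring)
  have := le_of_second_deriv_le hQ hQ' hF hF' (by simp [h0]) (by simp [h0']) hle 1 (by simp)
  linarith

lemma symmetric_second_difference_bounds {φ φ' φ'' : ℝ → ℝ} {Δ : ℝ} (hΔ0 : 0 ≤ Δ) (hΔ1 : Δ < 1)
    (hφ : ∀ t, HasDerivAt φ (φ' t) t) (hφ' : ∀ t, HasDerivAt φ' (φ'' t) t)
    (hφ'' : ∀ t, |t| ≤ 1 → (Δ * (1 - Δ * |t|)) ^ 2 ≤ φ'' t ∧ φ'' t ≤ (Δ / (1 - Δ * |t|)) ^ 2) :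
    Δ ^ 2 * (1 + Δ ^ 2 / 6 - 2 * Δ / 3) ≤ φ 1 + φ (-1) - 2 * φ 0 ∧
      φ 1 + φ (-1) - 2 * φ 0 ≤ -2 * Δ - 2 * Real.log (1 - Δ) := by
  have hF (t : ℝ) : HasDerivAt (fun s => φ s + φ (-s) - 2 * φ 0) (φ' t - φ' (-t)) t := by
    have := ((hφ t).add ((hφ (-t)).comp t (hasDerivAt_neg t))).sub_const (2 * φ 0)
    exact this.congr_deriv (by ring)
  have hF' (t : ℝ) : HasDerivAt (fun s => φ' s - φ' (-s)) (φ'' t + φ'' (-t)) t := by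
    have := (hφ' t).sub ((hφ' (-t)).comp t (hasDerivAt_neg t))
    exact this.congr_deriv (by ring)
  have hbounds (t : ℝ) (ht : t ∈ Ico (0 : ℝ) 1) :
      2 * (Δ * (1 - Δ * t)) ^ 2 ≤ φ'' t + φ'' (-t) ∧
        φ'' t + φ'' (-t) ≤ 2 * (Δ / (1 - Δ * t)) ^ 2 := by
    have habs : |t| = t := abs_of_nonneg ht.1
    have hpos := hφ'' t (by rw [habs]; exact ht.2.le)
    have hneg := hφ'' (-t) (by rw [abs_neg, habs]; exact ht.2.le)
    rw [abs_neg, habs] at hneg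
    rw [habs] at hpos
    constructor <;> linarith [hpos.1, hpos.2, hneg.1, hneg.2]
  constructor
  · exact le_apply_one_of_le_second_deriv (fun t _ => hF t) (fun t _ => hF' t)
      (by rw [neg_zero]; ring) (by rw [neg_zero, sub_self]) fun t ht => (hbounds t ht).1
  · exact apply_one_le_of_second_deriv_le hΔ0 hΔ1 (fun t _ => hF t) (fun t _ => hF' t)
      (by rw [neg_zero]; ring) (by rw [neg_zero, sub_self]) fun t ht => (hbounds t ht).2

section Boltzmann

variable {n : ℕ} {K : Set (EuclideanSpace ℝ (Fin n))}

local notation "E" => EuclideanSpace ℝ (Fin n)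

noncomputable def partitionFn (K : Set E) (θ : E) : ℝ := ∫ x in K, Real.exp ⟪θ, x⟫

noncomputable def logPartitionFn (K : Set E) (θ : E) : ℝ := Real.log (partitionFn K θ)

lemma partitionFn_nonneg (K : Set E) (θ : E) : 0 ≤ partitionFn K θ :=
  integral_nonneg fun _ => (Real.exp_pos _).le

lemma integrableOn_exp_inner (hK : IsCompact K) (θ : E) :
    IntegrableOn (fun x => Real.exp ⟪θ, x⟫) K :=
  (by fun_prop : Continuous fun x : E => Real.exp ⟪θ, x⟫).continuousOn.integrableOn_compact hK

lemma partitionFn_pos (hK : IsCompact K) (hK0 : volume K ≠ 0) (θ : E) :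
    0 < partitionFn K θ := by
  rw [partitionFn, setIntegral_pos_iff_support_of_nonneg_ae
    (ae_of_all _ fun x => (Real.exp_pos _).le) (integrableOn_exp_inner hK θ)]
  simpa [Function.support, (Real.exp_pos _).ne'] using pos_iff_ne_zero.2 hK0

lemma withDensity_exp_inner_univ (hK : IsCompact K) (θ : E) :
    (volume.restrict K).withDensity (fun x => ENNReal.ofReal (Real.exp ⟪θ, x⟫)) univ =
      ENNReal.ofReal (partitionFn K θ) := by
  rw [withDensity_apply _ MeasurableSet.univ, Measure.restrict_univ,
    ← ofReal_integral_eq_lintegral_ofReal (integrableOn_exp_inner hK θ)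
      (ae_of_all _ fun x => (Real.exp_pos _).le)]
  rfl

lemma boltzmann_eq_smul_withDensity (hK : IsCompact K) (θ : E) :
    boltzmann K θ = (ENNReal.ofReal (partitionFn K θ))⁻¹ •
      (volume.restrict K).withDensity fun x => ENNReal.ofReal (Real.exp ⟪θ, x⟫) := by
  rw [boltzmann, withDensity_exp_inner_univ hK]

lemma isProbabilityMeasure_boltzmann (hK : IsCompact K) (hK0 : volume K ≠ 0) (θ : E) :
    IsProbabilityMeasure (boltzmann K θ) := by
  constructor
  rw [boltzmann_eq_smul_withDensity hK, Measure.smul_apply, withDensity_exp_inner_univ hK,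
    smul_eq_mul]
  exact ENNReal.inv_mul_cancel (by simpa using partitionFn_pos hK hK0 θ) ENNReal.ofReal_ne_top

lemma toReal_ofReal_exp (r : ℝ) : (ENNReal.ofReal (Real.exp r)).toReal = Real.exp r :=
  ENNReal.toReal_ofReal (Real.exp_pos r).le

lemma integral_boltzmann {F : Type*} [NormedAddCommGroup F] [NormedSpace ℝ F]
    (hK : IsCompact K) (θ : E) (φ : E → F) :
    ∫ x, φ x ∂boltzmann K θ = (partitionFn K θ)⁻¹ • ∫ x in K, Real.exp ⟪θ, x⟫ • φ x := by
  rw [boltzmann_eq_smul_withDensity hK, integral_smul_measure,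
    integral_withDensity_eq_integral_toReal_smul (by fun_prop)
      (ae_of_all _ fun _ => ENNReal.ofReal_lt_top), ENNReal.toReal_inv,
    ENNReal.toReal_ofReal (partitionFn_nonneg K θ)]
  simp only [toReal_ofReal_exp]

lemma integrable_boltzmann {F : Type*} [NormedAddCommGroup F] [NormedSpace ℝ F]
    (hK : IsCompact K) (hK0 : volume K ≠ 0) (θ : E) {φ : E → F} (hφ : Continuous φ) :
    Integrable φ (boltzmann K θ) := by
  rw [boltzmann_eq_smul_withDensity hK]
  refine Integrable.smul_measure ?_ (by simpa using partitionFn_pos hK hK0 θ)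
  rw [integrable_withDensity_iff_integrable_smul' (by fun_prop)
    (ae_of_all _ fun _ => ENNReal.ofReal_lt_top)]
  simp only [toReal_ofReal_exp]
  exact (by fun_prop : Continuous fun x => Real.exp ⟪θ, x⟫ • φ x).continuousOn
    |>.integrableOn_compact hK

lemma covForm_self_eq_variance {μ : Measure E} (hμ : Integrable (fun x : E => x) μ) (v : E) :
    covForm μ v v = Var[fun x => ⟪v, x⟫; μ] := by
  have hmean : ∫ x, ⟪v, x⟫ ∂μ = ⟪v, meanVec μ⟫ := integral_inner hμ v
  rw [variance_eq_integral (by fun_prop), covForm, hmean]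
  congr 1 with x
  rw [real_inner_comm v, inner_sub_right]
  ring

lemma covForm_self_nonneg (μ : Measure E) (v : E) : 0 ≤ covForm μ v v :=
  integral_nonneg fun _ => mul_self_nonneg _

lemma lnorm_nonneg (θ v : E) : 0 ≤ lnorm K θ v := Real.sqrt_nonneg _

lemma lnorm_smul (θ v : E) (t : ℝ) : lnorm K θ (t • v) = |t| * lnorm K θ v := by
  have : covForm (boltzmann K θ) (t • v) (t • v) = t ^ 2 * covForm (boltzmann K θ) v v := by
    rw [covForm, covForm, ← integral_const_mul]
    congr 1 with x
    rw [real_inner_smul_right]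
    ring
  rw [lnorm, lnorm, this, Real.sqrt_mul (sq_nonneg t), Real.sqrt_sq_eq_abs]

lemma sq_lnorm_eq_integral_sq_sub_sq (hK : IsCompact K) (hK0 : volume K ≠ 0) (θ u : E) :
    lnorm K θ u ^ 2 = ∫ x, ⟪u, x⟫ ^ 2 ∂boltzmann K θ - (∫ x, ⟪u, x⟫ ∂boltzmann K θ) ^ 2 := by
  have := isProbabilityMeasure_boltzmann hK hK0 θ
  have hL2 : MemLp (fun x : E => ⟪u, x⟫) 2 (boltzmann K θ) :=
    (memLp_two_iff_integrable_sq (by fun_prop)).2 (integrable_boltzmann hK hK0 θ (by fun_prop))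
  rw [lnorm, Real.sq_sqrt (covForm_self_nonneg _ u),
    covForm_self_eq_variance (integrable_boltzmann hK hK0 θ continuous_id), variance_eq_sub hL2]
  rfl

lemma hasDerivAt_setIntegral_exp_inner_line (hK : IsCompact K) {φ : E → ℝ} (hφ : Continuous φ)
    (θ u : E) (t : ℝ) :
    HasDerivAt (fun s : ℝ => ∫ x in K, Real.exp ⟪θ + s • u, x⟫ * φ x)
      (∫ x in K, Real.exp ⟪θ + t • u, x⟫ * (⟪u, x⟫ * φ x)) t := by
  have hF' : Continuous fun p : ℝ × E => Real.exp ⟪θ + p.1 • u, p.2⟫ * (⟪u, p.2⟫ * φ p.2) := by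
    fun_prop
  obtain ⟨B, hB⟩ :=
    ((isCompact_closedBall t 1).prod hK).exists_bound_of_continuousOn hF'.continuousOn
  have hderiv (x : E) (s : ℝ) : HasDerivAt (fun s : ℝ => Real.exp ⟪θ + s • u, x⟫ * φ x)
      (Real.exp ⟪θ + s • u, x⟫ * (⟪u, x⟫ * φ x)) s := by
    have hlin : HasDerivAt (fun s : ℝ => ⟪θ + s • u, x⟫) ⟪u, x⟫ s := by
      simpa [inner_add_left, real_inner_smul_left] using
        ((hasDerivAt_id s).mul_const ⟪u, x⟫).const_add ⟪θ, x⟫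
    exact (hlin.exp.mul_const (φ x)).congr_deriv (by ring)
  refine (hasDerivAt_integral_of_dominated_loc_of_deriv_le (bound := fun _ => B)
    (Metric.ball_mem_nhds t one_pos) (.of_forall fun _ => by fun_prop)
    ((by fun_prop : Continuous fun x => Real.exp ⟪θ + t • u, x⟫ * φ x).continuousOn
      |>.integrableOn_compact hK)
    (by fun_prop) ?_ (integrableOn_const hK.measure_lt_top.ne)
    (ae_of_all _ fun x s _ => hderiv x s)).2
  refine (ae_restrict_mem hK.isClosed.measurableSet).mono fun x hx s hs => ?_
  exact hB (s, x) ⟨Metric.ball_subset_closedBall hs, hx⟩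

lemma integral_inner_boltzmann (hK : IsCompact K) (θ u : E) (k : ℕ) :
    ∫ x, ⟪u, x⟫ ^ k ∂boltzmann K θ =
      (∫ x in K, Real.exp ⟪θ, x⟫ * ⟪u, x⟫ ^ k) / partitionFn K θ := by
  rw [integral_boltzmann hK, smul_eq_mul, inv_mul_eq_div]
  rfl

lemma hasDerivAt_logPartitionFn_line (hK : IsCompact K) (hK0 : volume K ≠ 0)
    (θ u : E) (t : ℝ) :
    HasDerivAt (fun s => logPartitionFn K (θ + s • u))
      (∫ x, ⟪u, x⟫ ∂boltzmann K (θ + t • u)) t := by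
  have hZ := hasDerivAt_setIntegral_exp_inner_line hK continuous_const θ u t (φ := fun _ => 1)
  simp only [mul_one] at hZ
  refine (hZ.log (partitionFn_pos hK hK0 _).ne').congr_deriv ?_
  have hmean := integral_inner_boltzmann hK (θ + t • u) u 1
  simp only [pow_one] at hmean
  exact hmean.symm

lemma hasDerivAt_integral_inner_boltzmann_line (hK : IsCompact K) (hK0 : volume K ≠ 0)
    (θ u : E) (t : ℝ) :
    HasDerivAt (fun s => ∫ x, ⟪u, x⟫ ∂boltzmann K (θ + s • u)) (lnorm K (θ + t • u) u ^ 2) t := by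
  have hZ := hasDerivAt_setIntegral_exp_inner_line hK continuous_const θ u t (φ := fun _ => 1)
  have hZ1 := hasDerivAt_setIntegral_exp_inner_line hK (by fun_prop) θ u t (φ := fun x => ⟪u, x⟫)
  simp only [mul_one] at hZ
  have hmean (s : ℝ) := integral_inner_boltzmann hK (θ + s • u) u 1
  simp only [pow_one] at hmean
  rw [funext hmean]
  refine (hZ1.div hZ (partitionFn_pos hK hK0 _).ne').congr_deriv ?_
  rw [sq_lnorm_eq_integral_sq_sub_sq hK hK0, hmean, integral_inner_boltzmann hK _ u 2]
  simp only [partitionFn, sq]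
  field_simp

lemma withDensity_boltzmann (hK : IsCompact K) (hK0 : volume K ≠ 0) (θ₀ θ₁ : E) :
    (boltzmann K θ₁).withDensity (fun x => ENNReal.ofReal
      (partitionFn K θ₁ / partitionFn K θ₀ * Real.exp ⟪θ₀ - θ₁, x⟫)) = boltzmann K θ₀ := by
  have hZ₀ := partitionFn_pos hK hK0 θ₀
  have hZ₁ := partitionFn_pos hK hK0 θ₁
  have hdensity : ((fun x : E => ENNReal.ofReal (Real.exp ⟪θ₁, x⟫)) * fun x => ENNReal.ofReal
      (partitionFn K θ₁ / partitionFn K θ₀ * Real.exp ⟪θ₀ - θ₁, x⟫)) =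
      ENNReal.ofReal (partitionFn K θ₁ / partitionFn K θ₀) •
        fun x => ENNReal.ofReal (Real.exp ⟪θ₀, x⟫) := by
    ext x
    rw [Pi.mul_apply, Pi.smul_apply, smul_eq_mul, ← ENNReal.ofReal_mul (Real.exp_pos _).le,
      ← ENNReal.ofReal_mul (div_pos hZ₁ hZ₀).le, mul_left_comm, ← Real.exp_add, ← inner_add_left,
      add_sub_cancel]
  rw [boltzmann_eq_smul_withDensity hK θ₁, boltzmann_eq_smul_withDensity hK θ₀,
    withDensity_smul_measure, ← withDensity_mul _ (by fun_prop) (by fun_prop), hdensity,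
    withDensity_smul _ (by fun_prop), smul_smul, ENNReal.ofReal_div_of_pos hZ₀, div_eq_mul_inv,
    ← mul_assoc, ENNReal.inv_mul_cancel (by simpa using hZ₁) ENNReal.ofReal_ne_top, one_mul]

lemma integral_rnDeriv_boltzmann (hK : IsCompact K) (hK0 : volume K ≠ 0) (θ u : E) :
    ∫ x, ((boltzmann K θ).rnDeriv (boltzmann K (θ + u)) x).toReal ∂boltzmann K θ =
      Real.exp (logPartitionFn K (θ + u) + logPartitionFn K (θ - u) - 2 * logPartitionFn K θ) := by
  have := isProbabilityMeasure_boltzmann hK hK0 (θ + u)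
  set c := partitionFn K (θ + u) / partitionFn K θ
  have hrnDeriv := Measure.rnDeriv_withDensity (boltzmann K (θ + u))
    (by fun_prop : Measurable fun x => ENNReal.ofReal (c * Real.exp ⟪θ - (θ + u), x⟫))
  rw [withDensity_boltzmann hK hK0] at hrnDeriv
  have hac : boltzmann K θ ≪ boltzmann K (θ + u) := by
    rw [← withDensity_boltzmann hK hK0 θ (θ + u)]
    exact withDensity_absolutelyContinuous _ _
  have hZ := partitionFn_pos hK hK0
  have hintegrand (x : E) :
      Real.exp ⟪θ, x⟫ • (ENNReal.ofReal (c * Real.exp ⟪θ - (θ + u), x⟫)).toReal =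
        c * Real.exp ⟪θ - u, x⟫ := by
    rw [smul_eq_mul, ENNReal.toReal_ofReal (mul_pos (div_pos (hZ _) (hZ _)) (Real.exp_pos _)).le,
      mul_left_comm, ← Real.exp_add, ← inner_add_left]
    congr 3
    abel
  rw [integral_congr_ae ((hac.ae_eq hrnDeriv).mono fun x hx => congrArg ENNReal.toReal hx),
    integral_boltzmann hK]
  simp only [hintegrand]
  rw [integral_const_mul, smul_eq_mul, Real.exp_sub, Real.exp_add, logPartitionFn,
    logPartitionFn, logPartitionFn, ← Real.log_rpow (hZ θ), Real.exp_log (hZ _),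
    Real.exp_log (hZ _), Real.exp_log (Real.rpow_pos_of_pos (hZ θ) 2), Real.rpow_two]
  simp only [c, partitionFn]
  field_simp

lemma sq_lnorm_line_bounds
    (hsc : ∀ θ₀ θ₁ v : E, lnorm K θ₀ (θ₁ - θ₀) < 1 →
      (1 - lnorm K θ₀ (θ₁ - θ₀)) * lnorm K θ₀ v ≤ lnorm K θ₁ v ∧
        lnorm K θ₁ v ≤ lnorm K θ₀ v / (1 - lnorm K θ₀ (θ₁ - θ₀)))
    {θ u : E} (hΔ : lnorm K θ u < 1) {t : ℝ} (ht : |t| ≤ 1) :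
    (lnorm K θ u * (1 - lnorm K θ u * |t|)) ^ 2 ≤ lnorm K (θ + t • u) u ^ 2 ∧
      lnorm K (θ + t • u) u ^ 2 ≤ (lnorm K θ u / (1 - lnorm K θ u * |t|)) ^ 2 := by
  have hΔ0 := lnorm_nonneg (K := K) θ u
  have hline : lnorm K θ (θ + t • u - θ) = lnorm K θ u * |t| := by
    rw [add_sub_cancel_left, lnorm_smul, mul_comm]
  have hlt : lnorm K θ u * |t| < 1 := (mul_le_of_le_one_right hΔ0 ht).trans_lt hΔ
  obtain ⟨hlower, hupper⟩ := hsc θ (θ + t • u) u (hline ▸ hlt)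
  rw [hline, mul_comm] at hlower
  rw [hline] at hupper
  exact ⟨pow_le_pow_left₀ (mul_nonneg hΔ0 (by linarith)) hlower 2,
    pow_le_pow_left₀ (lnorm_nonneg _ _) hupper 2⟩

end Boltzmann

theorem stmt8_general (n : ℕ) (K : Set (EuclideanSpace ℝ (Fin n)))
    (hKcomp : IsCompact K) (hKint : (interior K).Nonempty)
    -- self-concordance of the log partition function `f` of `K` (Bubeck–Eldan):
    (hsc : ∀ θ₀ θ₁ v : EuclideanSpace ℝ (Fin n), lnorm K θ₀ (θ₁ - θ₀) < 1 →
      (1 - lnorm K θ₀ (θ₁ - θ₀)) * lnorm K θ₀ v ≤ lnorm K θ₁ v ∧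
        lnorm K θ₁ v ≤ lnorm K θ₀ v / (1 - lnorm K θ₀ (θ₁ - θ₀)))
    (θ₀ θ₁ : EuclideanSpace ℝ (Fin n))
    (hΔ : lnorm K θ₀ (θ₁ - θ₀) < 1) :
    Real.exp ((lnorm K θ₀ (θ₁ - θ₀)) ^ 2 *
        (1 + (lnorm K θ₀ (θ₁ - θ₀)) ^ 2 / 6 - 2 * lnorm K θ₀ (θ₁ - θ₀) / 3)) ≤
      (∫ x, ((boltzmann K θ₀).rnDeriv (boltzmann K θ₁) x).toReal ∂(boltzmann K θ₀)) ∧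
    (∫ x, ((boltzmann K θ₀).rnDeriv (boltzmann K θ₁) x).toReal ∂(boltzmann K θ₀)) ≤
      Real.exp (-2 * lnorm K θ₀ (θ₁ - θ₀)) / (1 - lnorm K θ₀ (θ₁ - θ₀)) ^ 2 := by
  have hK0 : volume K ≠ 0 :=
    ((isOpen_interior.measure_pos volume hKint).trans_le (measure_mono interior_subset)).ne'
  set u := θ₁ - θ₀
  set Δ := lnorm K θ₀ u
  obtain ⟨hlower, hupper⟩ := symmetric_second_difference_bounds (lnorm_nonneg θ₀ u) hΔ
    (hasDerivAt_logPartitionFn_line hKcomp hK0 θ₀ u)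
    (hasDerivAt_integral_inner_boltzmann_line hKcomp hK0 θ₀ u)
    fun t ht => sq_lnorm_line_bounds hsc hΔ ht
  simp only [one_smul, neg_one_smul, zero_smul, add_zero, ← sub_eq_add_neg] at hlower hupper
  have hθ₁ : θ₁ = θ₀ + u := (add_sub_cancel θ₀ θ₁).symm
  rw [hθ₁, integral_rnDeriv_boltzmann hKcomp hK0]
  refine ⟨Real.exp_le_exp.2 hlower, ?_⟩
  calc _ ≤ Real.exp (-2 * Δ - 2 * Real.log (1 - Δ)) := Real.exp_le_exp.2 hupper
    _ = Real.exp (-2 * Δ) / (1 - Δ) ^ 2 := by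
      rw [Real.exp_sub, ← Real.log_rpow (by linarith), Real.exp_log (by positivity),
        Real.rpow_two]

theorem stmt8 (n : ℕ) (K : Set (EuclideanSpace ℝ (Fin n)))
    (hKconv : Convex ℝ K) (hKcomp : IsCompact K) (hKint : (interior K).Nonempty)
    -- self-concordance of the log partition function `f` of `K` (Bubeck–Eldan):
    (hsc : ∀ θ₀ θ₁ v : EuclideanSpace ℝ (Fin n), lnorm K θ₀ (θ₁ - θ₀) < 1 →
      (1 - lnorm K θ₀ (θ₁ - θ₀)) * lnorm K θ₀ v ≤ lnorm K θ₁ v ∧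
        lnorm K θ₁ v ≤ lnorm K θ₀ v / (1 - lnorm K θ₀ (θ₁ - θ₀)))
    (θ₀ θ₁ : EuclideanSpace ℝ (Fin n))
    (hΔ : lnorm K θ₀ (θ₁ - θ₀) < 1) :
    Real.exp ((lnorm K θ₀ (θ₁ - θ₀)) ^ 2 *
        (1 + (lnorm K θ₀ (θ₁ - θ₀)) ^ 2 / 6 - 2 * lnorm K θ₀ (θ₁ - θ₀) / 3)) ≤
      (∫ x, ((boltzmann K θ₀).rnDeriv (boltzmann K θ₁) x).toReal ∂(boltzmann K θ₀)) ∧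
    (∫ x, ((boltzmann K θ₀).rnDeriv (boltzmann K θ₁) x).toReal ∂(boltzmann K θ₀)) ≤
      Real.exp (-2 * lnorm K θ₀ (θ₁ - θ₀)) / (1 - lnorm K θ₀ (θ₁ - θ₀)) ^ 2 :=
  stmt8_general n K hKcomp hKint hsc θ₀ θ₁ hΔ
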